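/- Let d ≥ 2, κ ≥ 1, and let (b_ℓ)_{ℓ∈ℕ} be positive reals with κ^{-1} ≤ b_ℓ/(2ℓ+d) ≤ κ for all ℓ. Then there exist constants C and c ≥ 1, depending only on d, κ, such that for all x > 0 and u ∈ ℝ^d with |u| ≥ c·x, the sum over ℓ with 2ℓ+d ≤ x of H_{d,ℓ}(b_ℓ^{-1/2} u) is at most C·exp(-|u|²/(c·x)), where H_{d,ℓ}(u) = Σ_{n∈ℕ^d, n_1+⋯+n_d = ℓ} h_{n_1}²(u_1)⋯h_{n_d}²(u_d). -/

import Mathlib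

/-- The ℓ-th Hermite function. -/
noncomputable def hermiteFun (m : ℕ) (t : ℝ) : ℝ :=
  (-1) ^ m * (Real.sqrt ((m.factorial : ℝ) * 2 ^ m * Real.sqrt Real.pi))⁻¹ *
    Real.exp (t ^ 2 / 2) * iteratedDeriv m (fun u : ℝ => Real.exp (-u ^ 2)) t

/-- H_{d,ℓ}(u) = Σ_{|n|₁ = ℓ} h_{n₁}²(u₁)⋯h_{n_d}²(u_d). -/
noncomputable def HermiteSum (d ℓ : ℕ) (u : Fin d → ℝ) : ℝ :=
  ∑ n ∈ Finset.Nat.antidiagonalTuple d ℓ, ∏ i, hermiteFun (n i) (u i) ^ 2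

/-! Through the probabilists' Hermite polynomials, `h_m(t)² = He_m(√2 t)² e^{-t²} / (m! √π)`,
and the explicit coefficients of `He_m` give `He_m(y)² ≤ 32^m m! e^{y²/8}`, hence
`h_m(t)² ≤ 32^m e^{-t²/2}`. Summing over the at most `(2^d)^ℓ` multi-indices,
`H_{d,ℓ}(t) ≤ A^ℓ e^{-|t|²/2}` with `A = 2^d · 32`. For `2ℓ + d ≤ x` we have `b_ℓ ≤ κ x` and
`A^ℓ ≤ e^{A x / 2}`, so each of the `O(x)` summands is at most `e^{A x / 2} e^{-|u|² / (2 κ x)}`;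
once `|u| ≥ c x` with `c = 4 κ (1 + A / 2)`, the Gaussian factor absorbs the exponential growth
in `x`. -/

open Finset Nat Polynomial Real

lemma Nat.doubleFactorial_pred_sq_le_factorial : ∀ n : ℕ, ((n - 1)‼) ^ 2 ≤ n !
  | 0 | 1 => le_rfl
  | n + 2 => by
    rw [show n + 2 - 1 = n + 1 by omega, doubleFactorial_add_one, mul_pow, factorial_succ,
      factorial_succ]
    calc (n + 1) ^ 2 * ((n - 1)‼) ^ 2 ≤ (n + 1) ^ 2 * n ! :=
          Nat.mul_le_mul_left _ (doubleFactorial_pred_sq_le_factorial n)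
      _ ≤ (n + 2) * ((n + 1) * n !) := by rw [← mul_assoc, sq]; gcongr; omega

lemma Polynomial.coeff_hermite_sq_mul_factorial_le (m k : ℕ) :
    (hermite m).coeff k ^ 2 * k ! ≤ 2 ^ m * m ! := by
  have bound : (m - k - 1)‼ ^ 2 * m.choose k ^ 2 * k ! ≤ 2 ^ m * m ! := by
    rcases le_or_gt k m with hkm | hkm
    · calc (m - k - 1)‼ ^ 2 * m.choose k ^ 2 * k !
            = ((m - k - 1)‼) ^ 2 * m.choose k * (m.choose k * k !) := by ring
        _ ≤ (m - k) ! * m.choose k * (m.choose k * k !) := by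
          gcongr
          exact doubleFactorial_pred_sq_le_factorial (m - k)
        _ = m.choose k * m ! := by rw [← choose_mul_factorial_mul_factorial hkm]; ring
        _ ≤ 2 ^ m * m ! := Nat.mul_le_mul_right _ (choose_le_two_pow m k)
    · simp [choose_eq_zero_of_lt hkm]
  rw [coeff_hermite]
  split_ifs
  · rw [mul_pow, mul_pow, ← pow_mul, mul_comm _ 2, pow_mul, neg_one_sq, one_pow, one_mul]
    exact_mod_cast bound
  · rw [zero_pow two_ne_zero, zero_mul]
    positivity

lemma Polynomial.aeval_hermite_sq_le (m : ℕ) (y : ℝ) :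
    aeval y (hermite m) ^ 2 ≤ 32 ^ m * m ! * exp (y ^ 2 / 8) := by
  have hcoeff (k : ℕ) : ((hermite m).coeff k : ℝ) ^ 2 ≤ 2 ^ m * m ! / k ! := by
    rw [le_div_iff₀ (by positivity)]
    exact_mod_cast coeff_hermite_sq_mul_factorial_le m k
  have hcard : ((m + 1 : ℕ) : ℝ) ≤ 2 ^ m := by exact_mod_cast Nat.lt_two_pow_self
  rw [aeval_eq_sum_range, natDegree_hermite]
  calc (∑ k ∈ range (m + 1), (hermite m).coeff k • y ^ k) ^ 2
      ≤ (m + 1 : ℕ) * ∑ k ∈ range (m + 1), (((hermite m).coeff k : ℝ) * y ^ k) ^ 2 := by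
        simpa only [zsmul_eq_mul, card_range] using
          sq_sum_le_card_mul_sum_sq (s := range (m + 1))
            (f := fun k => ((hermite m).coeff k : ℝ) * y ^ k)
    _ ≤ 2 ^ m * ∑ k ∈ range (m + 1), 2 ^ m * m ! * 8 ^ m * ((y ^ 2 / 8) ^ k / k !) := by
        gcongr with k hk
        have h8 : (8 : ℝ) ^ k ≤ 8 ^ m :=
          pow_le_pow_right₀ (by norm_num) (Nat.lt_succ_iff.mp (mem_range.mp hk))
        calc (((hermite m).coeff k : ℝ) * y ^ k) ^ 2
            = ((hermite m).coeff k : ℝ) ^ 2 * (8 ^ k * ((y ^ 2 / 8) ^ k)) := by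
              rw [div_pow, mul_div_cancel₀ _ (by positivity)]; ring
          _ ≤ 2 ^ m * m ! / k ! * (8 ^ m * ((y ^ 2 / 8) ^ k)) := by gcongr; exact hcoeff k
          _ = _ := by ring
    _ ≤ 2 ^ m * (2 ^ m * m ! * 8 ^ m * exp (y ^ 2 / 8)) := by
        rw [← mul_sum]
        gcongr
        exact sum_le_exp_of_nonneg (by positivity) _
    _ = 32 ^ m * m ! * exp (y ^ 2 / 8) := by
        rw [show (32 : ℝ) = 2 * 2 * 8 by norm_num, mul_pow, mul_pow]; ring

lemma iteratedDeriv_exp_neg_sq (m : ℕ) (t : ℝ) :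
    iteratedDeriv m (fun u : ℝ => exp (-u ^ 2)) t =
      (-√2) ^ m * aeval (√2 * t) (hermite m) * exp (-t ^ 2) := by
  have hsqrt : ∀ s : ℝ, (√2 * s) ^ 2 / 2 = s ^ 2 := fun s => by
    rw [mul_pow, sq_sqrt zero_le_two]; ring
  have hscale : (fun u : ℝ => exp (-u ^ 2)) = fun u => exp (-((√2 * u) ^ 2 / 2)) := by
    simp only [hsqrt]
  have hgauss : ContDiff ℝ m fun y : ℝ => exp (-(y ^ 2 / 2)) := by fun_prop
  rw [hscale, iteratedDeriv_comp_const_mul hgauss, iteratedDeriv_eq_iterate]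
  dsimp only
  rw [deriv_gaussian_eq_hermite_mul_gaussian, hsqrt, neg_pow]
  ring

lemma hermiteFun_sq (m : ℕ) (t : ℝ) :
    hermiteFun m t ^ 2 = aeval (√2 * t) (hermite m) ^ 2 * exp (-t ^ 2) / (m ! * √π) := by
  have hnorm : √((m ! : ℝ) * 2 ^ m * √π) ^ 2 = m ! * 2 ^ m * √π := sq_sqrt (by positivity)
  have hsign : ((-1 : ℝ) ^ m) ^ 2 = 1 := by rw [← pow_mul, mul_comm, pow_mul, neg_one_sq, one_pow]
  have hsqrt2 : ((-√2 : ℝ) ^ m) ^ 2 = 2 ^ m := by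
    rw [← pow_mul, mul_comm, pow_mul, neg_sq, sq_sqrt zero_le_two]
  have hexp : exp (t ^ 2 / 2) ^ 2 * exp (-t ^ 2) ^ 2 = exp (-t ^ 2) := by
    rw [← mul_pow, ← exp_add, ← exp_nat_mul]; ring_nf
  rw [hermiteFun, iteratedDeriv_exp_neg_sq]
  calc _ = ((-1 : ℝ) ^ m) ^ 2 * ((-√2 : ℝ) ^ m) ^ 2 * (√((m ! : ℝ) * 2 ^ m * √π) ^ 2)⁻¹ *
        (exp (t ^ 2 / 2) ^ 2 * exp (-t ^ 2) ^ 2) * aeval (√2 * t) (hermite m) ^ 2 := by ring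
    _ = _ := by
      rw [hsign, hsqrt2, hnorm, hexp]
      field_simp

lemma hermiteFun_sq_le (m : ℕ) (t : ℝ) : hermiteFun m t ^ 2 ≤ 32 ^ m * exp (-t ^ 2 / 2) := by
  have hP : aeval (√2 * t) (hermite m) ^ 2 ≤ 32 ^ m * m ! * exp (t ^ 2 / 4) := by
    convert aeval_hermite_sq_le m (√2 * t) using 3
    rw [mul_pow, sq_sqrt zero_le_two]; ring
  have hpi : 1 ≤ √π := one_le_sqrt.mpr (by linarith [pi_gt_three])
  rw [hermiteFun_sq, div_le_iff₀ (by positivity)]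
  calc aeval (√2 * t) (hermite m) ^ 2 * exp (-t ^ 2)
      ≤ 32 ^ m * m ! * exp (t ^ 2 / 4) * exp (-t ^ 2) := by gcongr
    _ = 32 ^ m * m ! * exp (-t ^ 2 / 2) * exp (-t ^ 2 / 4) := by
      rw [mul_assoc, ← exp_add, mul_assoc _ (exp _), ← exp_add]; ring_nf
    _ ≤ 32 ^ m * m ! * exp (-t ^ 2 / 2) * √π := by
      gcongr
      exact (exp_le_one_iff.mpr (by nlinarith [sq_nonneg t])).trans hpi
    _ = 32 ^ m * exp (-t ^ 2 / 2) * (m ! * √π) := by ring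

lemma Finset.Nat.card_antidiagonalTuple_le (d ℓ : ℕ) :
    #(Finset.Nat.antidiagonalTuple d ℓ) ≤ (2 ^ d) ^ ℓ := by
  have hsub :
      Finset.Nat.antidiagonalTuple d ℓ ⊆ Fintype.piFinset fun _ : Fin d => range (ℓ + 1) := by
    intro n hn
    rw [Finset.Nat.mem_antidiagonalTuple] at hn
    simp only [Fintype.mem_piFinset, mem_range, Nat.lt_succ_iff]
    exact fun i => hn ▸ single_le_sum (fun j _ => Nat.zero_le (n j)) (mem_univ i)
  calc #(Finset.Nat.antidiagonalTuple d ℓ) ≤ (ℓ + 1) ^ d := by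
        simpa using card_le_card hsub
    _ ≤ (2 ^ ℓ) ^ d := Nat.pow_le_pow_left Nat.lt_two_pow_self d
    _ = (2 ^ d) ^ ℓ := by rw [← pow_mul, ← pow_mul, mul_comm]

lemma hermiteSum_le (d ℓ : ℕ) (t : Fin d → ℝ) :
    HermiteSum d ℓ t ≤ (2 ^ d * 32) ^ ℓ * exp (-(∑ i, t i ^ 2) / 2) := by
  have hterm : ∀ n ∈ Finset.Nat.antidiagonalTuple d ℓ,
      ∏ i, hermiteFun (n i) (t i) ^ 2 ≤ 32 ^ ℓ * exp (-(∑ i, t i ^ 2) / 2) := by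
    intro n hn
    calc ∏ i, hermiteFun (n i) (t i) ^ 2 ≤ ∏ i, 32 ^ n i * exp (-t i ^ 2 / 2) :=
          prod_le_prod (fun i _ => sq_nonneg _) fun i _ => hermiteFun_sq_le (n i) (t i)
      _ = 32 ^ ℓ * exp (-(∑ i, t i ^ 2) / 2) := by
        rw [prod_mul_distrib, prod_pow_eq_pow_sum, Finset.Nat.mem_antidiagonalTuple.mp hn,
          ← exp_sum, ← sum_div, sum_neg_distrib]
  have hcard : (#(Finset.Nat.antidiagonalTuple d ℓ) : ℝ) ≤ (2 ^ d) ^ ℓ := by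
    exact_mod_cast Finset.Nat.card_antidiagonalTuple_le d ℓ
  calc HermiteSum d ℓ t
      ≤ #(Finset.Nat.antidiagonalTuple d ℓ) * (32 ^ ℓ * exp (-(∑ i, t i ^ 2) / 2)) := by
        simpa only [HermiteSum, nsmul_eq_mul] using sum_le_card_nsmul _ _ _ hterm
    _ ≤ (2 ^ d) ^ ℓ * (32 ^ ℓ * exp (-(∑ i, t i ^ 2) / 2)) := by gcongr
    _ = (2 ^ d * 32) ^ ℓ * exp (-(∑ i, t i ^ 2) / 2) := by rw [mul_pow]; ring

lemma hermiteSum_inv_sqrt_mul_le {d ℓ : ℕ} {β κ x : ℝ} (u : EuclideanSpace ℝ (Fin d))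
    (hβ : 0 < β) (hβx : β ≤ κ * x) (hℓx : 2 * ℓ ≤ x) :
    HermiteSum d ℓ (fun i => (√β)⁻¹ * u i) ≤
      exp ((2 ^ d * 32) * x / 2) * exp (-‖u‖ ^ 2 / (2 * κ * x)) := by
  set A : ℝ := 2 ^ d * 32
  have hpow : A ^ ℓ ≤ exp (A * x / 2) := calc
    A ^ ℓ ≤ exp A ^ ℓ := by gcongr; linarith [add_one_le_exp A]
    _ = exp (ℓ * A) := (exp_nat_mul A ℓ).symm
    _ ≤ exp (A * x / 2) := exp_le_exp.mpr (by nlinarith [show (0 : ℝ) < A by positivity])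
  have hnorm : ∑ i, ((√β)⁻¹ * u i) ^ 2 = ‖u‖ ^ 2 / β := by
    simp only [mul_pow, inv_pow, sq_sqrt hβ.le, ← mul_sum, EuclideanSpace.real_norm_sq_eq]
    ring
  have hgauss : -(‖u‖ ^ 2 / β) / 2 ≤ -‖u‖ ^ 2 / (2 * κ * x) := by
    rw [neg_div, neg_div, neg_le_neg_iff, div_div, mul_comm β, mul_assoc]
    exact div_le_div_of_nonneg_left (sq_nonneg _) (by positivity) (by linarith)
  calc HermiteSum d ℓ (fun i => (√β)⁻¹ * u i) ≤ A ^ ℓ * exp (-(‖u‖ ^ 2 / β) / 2) := by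
        simpa only [hnorm] using hermiteSum_le d ℓ (fun i => (√β)⁻¹ * u i)
    _ ≤ exp (A * x / 2) * exp (-‖u‖ ^ 2 / (2 * κ * x)) := by gcongr

lemma mul_sub_div_le_neg_div_of_sq_le {κ L x N : ℝ} (hκ : 1 ≤ κ) (hL : 1 ≤ L) (hx : 0 < x)
    (hN : (4 * κ * L * x) ^ 2 ≤ N) :
    L * x - N / (2 * κ * x) ≤ -N / (4 * κ * L * x) := by
  have hκL : 1 ≤ 4 * κ * L := by nlinarith
  have hN0 : 0 ≤ N := (sq_nonneg _).trans hN
  have hL_div : N / (4 * κ * L * x) ≤ N / (4 * κ * x) :=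
    div_le_div_of_nonneg_left hN0 (by positivity)
      (by nlinarith [mul_pos (by linarith : (0 : ℝ) < κ) hx])
  have hlin : L * x ≤ N / (4 * κ * x) := by
    rw [le_div_iff₀ (by positivity)]
    calc L * x * (4 * κ * x) = 1 * (4 * κ * L) * x ^ 2 := by ring
      _ ≤ (4 * κ * L) * (4 * κ * L) * x ^ 2 := by gcongr
      _ = (4 * κ * L * x) ^ 2 := by ring
      _ ≤ N := hN
  have hhalf : N / (2 * κ * x) = 2 * (N / (4 * κ * x)) := by field_simp; ring
  rw [neg_div, hhalf]
  linarith

theorem hermite_sum_gaussian_decay (d : ℕ) (hd : 2 ≤ d) (κ : ℝ) (hκ : 1 ≤ κ)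
    (b : ℕ → ℝ) (hb : ∀ ℓ, 0 < b ℓ)
    (hκb : ∀ ℓ : ℕ, κ⁻¹ ≤ b ℓ / (2 * ℓ + d) ∧ b ℓ / (2 * ℓ + d) ≤ κ) :
    ∃ C c : ℝ, 1 ≤ c ∧ ∀ x : ℝ, 0 < x → ∀ u : EuclideanSpace ℝ (Fin d), c * x ≤ ‖u‖ →
      (∑ ℓ ∈ (Finset.range (⌈x⌉₊ + 1)).filter (fun ℓ : ℕ => 2 * (ℓ:ℝ) + d ≤ x),
          HermiteSum d ℓ (fun i => (Real.sqrt (b ℓ))⁻¹ * u i))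
        ≤ C * Real.exp (-‖u‖ ^ 2 / (c * x)) := by
  set A : ℝ := 2 ^ d * 32
  set L : ℝ := 1 + A / 2
  have hL : 1 ≤ L := le_add_of_nonneg_right (by positivity)
  have hd0 : (0 : ℝ) < d := by exact_mod_cast (by omega : 0 < d)
  refine ⟨exp 1, 4 * κ * L, by nlinarith, fun x hx u hu => ?_⟩
  set S := (range (⌈x⌉₊ + 1)).filter fun ℓ : ℕ => 2 * (ℓ : ℝ) + d ≤ x
  have hterm : ∀ ℓ ∈ S, HermiteSum d ℓ (fun i => (√(b ℓ))⁻¹ * u i) ≤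
      exp (A * x / 2) * exp (-‖u‖ ^ 2 / (2 * κ * x)) := by
    intro ℓ hℓ
    have hℓx : 2 * (ℓ : ℝ) + d ≤ x := (mem_filter.mp hℓ).2
    have hbℓ : b ℓ ≤ κ * (2 * ℓ + d) := (div_le_iff₀ (by positivity)).mp (hκb ℓ).2
    exact hermiteSum_inv_sqrt_mul_le u (hb ℓ) (hbℓ.trans (by gcongr)) (by linarith)
  have hcard : (#S : ℝ) ≤ exp (x + 1) := calc
    (#S : ℝ) ≤ ⌈x⌉₊ + 1 := by exact_mod_cast (card_filter_le _ _).trans (card_range _).le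
    _ ≤ x + 2 := by linarith [Nat.ceil_lt_add_one hx.le]
    _ ≤ exp (x + 1) := by linarith [add_one_le_exp (x + 1)]
  have hexponent :=
    mul_sub_div_le_neg_div_of_sq_le hκ hL hx (pow_le_pow_left₀ (by positivity) hu 2)
  calc ∑ ℓ ∈ S, HermiteSum d ℓ (fun i => (√(b ℓ))⁻¹ * u i)
      ≤ #S * (exp (A * x / 2) * exp (-‖u‖ ^ 2 / (2 * κ * x))) := by
        simpa only [nsmul_eq_mul] using sum_le_card_nsmul _ _ _ hterm
    _ ≤ exp (x + 1) * (exp (A * x / 2) * exp (-‖u‖ ^ 2 / (2 * κ * x))) := by gcongr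
    _ = exp 1 * exp (L * x - ‖u‖ ^ 2 / (2 * κ * x)) := by
        rw [← exp_add, ← exp_add, ← exp_add]
        congr 1
        ring
    _ ≤ exp 1 * exp (-‖u‖ ^ 2 / (4 * κ * L * x)) := by gcongr
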